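/- Let K ⊂ ℝ^d be a compact set and let φ : ℝ^d → ℂ be a smooth function. Then the following are equivalent: (i) there exists h > 0 such that sup_{k∈ℕ₀^d} sup_{x∈K} |∂^kφ(x)|/(h^{|k|} M_k) < ∞; (ii) for every (r_p) ∈ ℜ one has sup_{k∈ℕ₀^d} sup_{x∈K} |∂^kφ(x)|/(R_{|k|} M_k) < ∞. -/

import Mathlib

open scoped ENNReal BigOperators

noncomputable section

/-- `ℝ^d` modeled as Euclidean space. -/
abbrev Euc (d : ℕ) := EuclideanSpace ℝ (Fin d)

/-- The partial derivative `∂_i φ` of a function `φ : ℝ^d → ℂ`. -/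
noncomputable def pderivI {d : ℕ} (i : Fin d) (φ : Euc d → ℂ) : Euc d → ℂ :=
  fun x => fderiv ℝ φ x (EuclideanSpace.single i 1)

/-- The multi-index partial derivative `∂^k φ = ∂_1^{k_1} ⋯ ∂_d^{k_d} φ`. -/
noncomputable def mderiv {d : ℕ} (k : Fin d → ℕ) (φ : Euc d → ℂ) : Euc d → ℂ :=
  (List.finRange d).foldr (fun i ψ => (pderivI i)^[k i] ψ) φ

/-- The class ℜ of sequences with `r 0 = 1` monotonically increasing to infinity. -/
def RClass (r : ℕ → ℝ) : Prop :=
  r 0 = 1 ∧ Monotone r ∧ Filter.Tendsto r Filter.atTop Filter.atTop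

/-- The product sequence `R_p = ∏_{i=0}^p r_i`. -/
noncomputable def prodSeq (r : ℕ → ℝ) (p : ℕ) : ℝ :=
  ∏ i ∈ Finset.range (p + 1), r i

/-- The seminorm `q_{K,h}(φ)`, with values in `[0,∞]`. -/
noncomputable def qnormK {d : ℕ} (M : ℕ → ℝ) (K : Set (Euc d)) (h : ℝ)
    (φ : Euc d → ℂ) : ℝ≥0∞ :=
  ⨆ (k : Fin d → ℕ) (x : K), ENNReal.ofReal (‖mderiv k φ x‖ / (h ^ (∑ i, k i) * M (∑ i, k i)))

/-- The seminorm `sup_{k,x∈K} |∂^k φ(x)|/(R_{|k|} M_k)`, with values in `[0,∞]`. -/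
noncomputable def qrnormK {d : ℕ} (M : ℕ → ℝ) (r : ℕ → ℝ) (K : Set (Euc d))
    (φ : Euc d → ℂ) : ℝ≥0∞ :=
  ⨆ (k : Fin d → ℕ) (x : K),
    ENNReal.ofReal (‖mderiv k φ x‖ / (prodSeq r (∑ i, k i) * M (∑ i, k i)))

/-- The norm `‖φ‖_{∞,h}`, with values in `[0,∞]`. -/
noncomputable def hnorm {d : ℕ} (M : ℕ → ℝ) (h : ℝ) (φ : Euc d → ℂ) : ℝ≥0∞ :=
  ⨆ (k : Fin d → ℕ) (x : Euc d),
    ENNReal.ofReal (‖mderiv k φ x‖ / (h ^ (∑ i, k i) * M (∑ i, k i)))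

/-- The norm `‖φ‖_{(r_p)}`, with values in `[0,∞]`. -/
noncomputable def rnorm {d : ℕ} (M : ℕ → ℝ) (r : ℕ → ℝ) (φ : Euc d → ℂ) : ℝ≥0∞ :=
  ⨆ (k : Fin d → ℕ) (x : Euc d),
    ENNReal.ofReal (‖mderiv k φ x‖ / (prodSeq r (∑ i, k i) * M (∑ i, k i)))

/-- Membership in the space `D^{{M_p}}` of Roumieu test functions. -/
def IsDMp {d : ℕ} (M : ℕ → ℝ) (φ : Euc d → ℂ) : Prop :=
  ContDiff ℝ (⊤ : ℕ∞) φ ∧ HasCompactSupport φ ∧ ∃ h > 0, hnorm M h φ < ⊤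

/-- `T` is a ℂ-linear functional on `D^{{M_p}}`. -/
def LinearOnD {d : ℕ} (M : ℕ → ℝ) (T : (Euc d → ℂ) → ℂ) : Prop :=
  (∀ φ ψ, IsDMp M φ → IsDMp M ψ → T (φ + ψ) = T φ + T ψ) ∧
  (∀ (c : ℂ) (φ), IsDMp M φ → T (c • φ) = c * T φ)

/-- `T` is a Roumieu ultradistribution. -/
def IsRoumieuUD {d : ℕ} (M : ℕ → ℝ) (T : (Euc d → ℂ) → ℂ) : Prop :=
  ∀ K : Set (Euc d), IsCompact K →
    ∃ s, RClass s ∧ ∃ C > 0, ∀ φ, IsDMp M φ → tsupport φ ⊆ K →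
      ENNReal.ofReal ‖T φ‖ ≤ ENNReal.ofReal C * rnorm M s φ

/-- `u` is an ℜ-approximate unit. -/
def IsRApproxUnit {d : ℕ} (M : ℕ → ℝ) (u : ℕ → Euc d → ℂ) : Prop :=
  (∀ n, IsDMp M (u n)) ∧
  (∀ r, RClass r → (⨆ n, rnorm M r (u n)) < ⊤) ∧
  (∀ K : Set (Euc d), IsCompact K → ∃ h > 0,
    Filter.Tendsto (fun n => qnormK M K h (fun x => u n x - 1)) Filter.atTop (nhds 0))

/-- `u` is a special ℜ-approximate unit. -/
def IsSpecialRApproxUnit {d : ℕ} (M : ℕ → ℝ) (u : ℕ → Euc d → ℂ) : Prop :=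
  IsRApproxUnit M u ∧
  ∀ K : Set (Euc d), IsCompact K → ∃ n₀, ∀ n ≥ n₀, ∀ x ∈ K, u n x = 1

/-- Condition (M.1): `M_p^2 ≤ M_{p-1} M_{p+1}` for `p ≥ 1`. -/
def CondM1 (M : ℕ → ℝ) : Prop := ∀ p : ℕ, M (p + 1) ^ 2 ≤ M p * M (p + 2)

/-- Condition (M.2). -/
def CondM2 (M : ℕ → ℝ) : Prop :=
  ∃ A > 0, ∃ H ≥ (1 : ℝ), ∀ p q : ℕ, q ≤ p → M p ≤ A * H ^ p * M q * M (p - q)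

/-- Condition (M.3). -/
def CondM3 (M : ℕ → ℝ) : Prop :=
  ∃ A > 0, ∀ q : ℕ, 1 ≤ q →
    ∑' p : ℕ, M (q + p) / M (q + p + 1) ≤ A * q * M q / M (q + 1)

section Helpers
open Filter

private lemma group_sup {α β : Type*} (N : α → β → ℝ≥0∞) (s : α → ℕ) (D : ℕ → ℝ≥0∞) :
    (⨆ a, ⨆ b, N a b / D (s a)) =
      ⨆ p, (⨆ a, ⨆ b, if s a = p then N a b else 0) / D p := by
  apply le_antisymm
  · refine iSup₂_le fun a b => ?_
    refine le_trans ?_ (le_iSup _ (s a))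
    refine ENNReal.div_le_div_right ?_ _
    refine le_trans (le_of_eq ?_)
      (le_iSup₂ (f := fun a' b' => if s a' = s a then N a' b' else 0) a b)
    simp
  · refine iSup_le fun p => ?_
    rw [ENNReal.iSup_div]
    refine iSup_le fun a => ?_
    rw [ENNReal.iSup_div]
    refine iSup_le fun b => ?_
    by_cases hs : s a = p
    · subst hs
      simpa using le_iSup₂ (f := fun a b => N a b / D (s a)) a b
    · simp [hs, ENNReal.zero_div]

private lemma rclass_one_le {r : ℕ → ℝ} (hr : RClass r) (i : ℕ) : 1 ≤ r i :=
  hr.1 ▸ hr.2.1 (Nat.zero_le i)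

private lemma one_le_prodSeq {r : ℕ → ℝ} (hr : ∀ i, 1 ≤ r i) (p : ℕ) : 1 ≤ prodSeq r p := by
  rw [prodSeq]
  calc (1:ℝ) = ∏ _i ∈ Finset.range (p + 1), (1:ℝ) := by simp
    _ ≤ ∏ i ∈ Finset.range (p + 1), r i :=
        Finset.prod_le_prod (fun i _ => zero_le_one) (fun i _ => hr i)

private lemma abstract_komatsu (b : ℕ → ℝ) (hb : ∀ p, 0 ≤ b p) :
    (∃ h > 0, (⨆ p, ENNReal.ofReal (b p / h ^ p)) < ⊤) ↔
      (∀ r, RClass r → (⨆ p, ENNReal.ofReal (b p / prodSeq r p)) < ⊤) := by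
  constructor
  · rintro ⟨h, hpos, hfin⟩ r hr
    obtain ⟨Nn, hN⟩ := eventually_atTop.mp (tendsto_atTop.mp hr.2.2 h)
    have hR1 : ∀ p, (1:ℝ) ≤ prodSeq r p := one_le_prodSeq (rclass_one_le hr)
    have hRpos : ∀ p, (0:ℝ) < prodSeq r p := fun p => lt_of_lt_of_le one_pos (hR1 p)
    have hterm : ∀ q, 0 ≤ h ^ q / prodSeq r q :=
      fun q => div_nonneg (pow_nonneg hpos.le q) (hRpos q).le
    set C : ℝ := 1 + ∑ q ∈ Finset.range (Nn + 1), h ^ q / prodSeq r q with hC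
    have hsum : 0 ≤ ∑ q ∈ Finset.range (Nn + 1), h ^ q / prodSeq r q :=
      Finset.sum_nonneg fun q _ => hterm q
    have hC0 : 0 < C := by rw [hC]; linarith
    have hle : ∀ p ≤ Nn, h ^ p ≤ C * prodSeq r p := by
      intro p hp
      have h1 : h ^ p / prodSeq r p ≤ C := by
        have := Finset.single_le_sum (f := fun q => h ^ q / prodSeq r q)
          (fun q _ => hterm q) (Finset.mem_range.mpr (Nat.lt_succ_of_le hp))
        linarith
      calc h ^ p = (h ^ p / prodSeq r p) * prodSeq r p :=
            (div_mul_cancel₀ _ (hRpos p).ne').symm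
        _ ≤ C * prodSeq r p := mul_le_mul_of_nonneg_right h1 (hRpos p).le
    have hkey : ∀ p, h ^ p ≤ C * prodSeq r p := by
      intro p
      rcases le_or_gt p Nn with hpN | hpN
      · exact hle p hpN
      · have hstep : ∀ q, Nn ≤ q → h ^ q ≤ C * prodSeq r q := by
          intro q hq
          induction q, hq using Nat.le_induction with
          | base => exact hle Nn le_rfl
          | succ n hn ih =>
            have hps : prodSeq r (n + 1) = prodSeq r n * r (n + 1) := by
              simp [prodSeq, Finset.prod_range_succ]
            rw [pow_succ, hps, ← mul_assoc]
            have hrn : h ≤ r (n + 1) := hN (n + 1) (by omega)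
            have hCR : 0 ≤ C * prodSeq r n := mul_nonneg hC0.le (hRpos n).le
            exact mul_le_mul ih hrn hpos.le hCR
        exact hstep p hpN.le
    have hmono : ∀ p, ENNReal.ofReal (b p / prodSeq r p) ≤
        ENNReal.ofReal C * ENNReal.ofReal (b p / h ^ p) := by
      intro p
      rw [← ENNReal.ofReal_mul hC0.le]
      apply ENNReal.ofReal_le_ofReal
      have hhp : 0 < h ^ p := pow_pos hpos p
      rw [← mul_div_assoc, div_le_div_iff₀ (hRpos p) hhp]
      nlinarith [mul_le_mul_of_nonneg_left (hkey p) (hb p)]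
    calc (⨆ p, ENNReal.ofReal (b p / prodSeq r p))
        ≤ ENNReal.ofReal C * ⨆ p, ENNReal.ofReal (b p / h ^ p) := by
          refine iSup_le fun p => (hmono p).trans ?_
          exact mul_le_mul_right (le_iSup (fun p => ENNReal.ofReal (b p / h ^ p)) p) _
      _ < ⊤ := ENNReal.mul_lt_top ENNReal.ofReal_lt_top hfin
  · intro hall
    classical
    by_contra hex
    push_neg at hex
    -- hex : ∀ h > 0, ⊤ ≤ ⨆ p, ...
    have claim : ∀ (m : ℕ) (P : ℕ), ∃ p, P ≤ p ∧ ((m + 1 : ℕ) : ℝ) ^ (p + 2) ≤ b p := by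
      intro m P
      set h : ℝ := ((m + 1 : ℕ) : ℝ) with hh_def
      have hh : 0 < h := by positivity
      have htop : (⨆ p, ENNReal.ofReal (b p / h ^ p)) = ⊤ := top_le_iff.mp (hex h hh)
      set C : ℝ := h ^ 2 + ∑ q ∈ Finset.range P, b q / h ^ q with hCdef
      have hsum : 0 ≤ ∑ q ∈ Finset.range P, b q / h ^ q :=
        Finset.sum_nonneg fun q _ => div_nonneg (hb q) (pow_nonneg hh.le q)
      have hCnn : 0 ≤ C := by positivity
      have hlt' : ENNReal.ofReal C < ⨆ p, ENNReal.ofReal (b p / h ^ p) := by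
        rw [htop]; exact ENNReal.ofReal_lt_top
      obtain ⟨p, hp⟩ := lt_iSup_iff.mp hlt'
      have hlt : C < b p / h ^ p := (ENNReal.ofReal_lt_ofReal_iff_of_nonneg hCnn).mp hp
      have hhp : 0 < h ^ p := pow_pos hh p
      refine ⟨p, ?_, ?_⟩
      · by_contra hpP
        push_neg at hpP
        have hsingle : b p / h ^ p ≤ ∑ q ∈ Finset.range P, b q / h ^ q :=
          Finset.single_le_sum (f := fun q => b q / h ^ q)
            (fun q _ => div_nonneg (hb q) (pow_nonneg hh.le q))
            (Finset.mem_range.mpr hpP)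
        have hsq : 0 ≤ h ^ 2 := sq_nonneg h
        rw [hCdef] at hlt
        linarith
      · have h1 : C * h ^ p < b p := (lt_div_iff₀ hhp).mp hlt
        have h2 : h ^ 2 * h ^ p ≤ C * h ^ p :=
          mul_le_mul_of_nonneg_right (by rw [hCdef]; linarith) hhp.le
        calc h ^ (p + 2) = h ^ 2 * h ^ p := by ring
          _ ≤ b p := by linarith
    choose F hF1 hF2 using claim
    obtain ⟨f, hf0, hfsucc⟩ : ∃ f : ℕ → ℕ, f 0 = 0 ∧ ∀ j, f (j + 1) = F j (f j + 1) :=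
      ⟨fun j => Nat.rec 0 (fun j' pj => F j' (pj + 1)) j, rfl, fun j => rfl⟩
    have hfmono : StrictMono f := strictMono_nat_of_lt_succ fun j => by
      have := hF1 j (f j + 1); rw [hfsucc]; omega
    have hfb : ∀ j, ((j + 1 : ℕ) : ℝ) ^ (f (j + 1) + 2) ≤ b (f (j + 1)) := fun j => by
      rw [hfsucc]; exact hF2 j (f j + 1)
    have hex_j : ∀ i, ∃ j, i ≤ f j := fun i => ⟨i, hfmono.le_apply⟩
    obtain ⟨g, hg_le, hg_spec⟩ : ∃ g : ℕ → ℕ,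
        (∀ i j, i ≤ f j → g i ≤ j) ∧ ∀ i, i ≤ f (g i) :=
      ⟨fun i => Nat.find (hex_j i), fun i j hij => Nat.find_le hij,
        fun i => Nat.find_spec (hex_j i)⟩
    have hg0 : g 0 = 0 := Nat.le_zero.mp (hg_le 0 0 (by simp [hf0]))
    have hgmono : Monotone g := fun i i' h => hg_le i (g i') (le_trans h (hg_spec i'))
    set r : ℕ → ℝ := fun i => max ((g i : ℕ) : ℝ) 1 with hrdef
    have hr1 : ∀ i, (1:ℝ) ≤ r i := fun i => le_max_right _ _
    have hr0 : r 0 = 1 := by simp [hrdef, hg0]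
    have hrmono : Monotone r := fun i i' h =>
      max_le_max (Nat.cast_le.mpr (hgmono h)) le_rfl
    have hgfn : ∀ n, n ≤ g (f n) := by
      intro n
      by_contra hc
      push_neg at hc
      exact absurd (hg_spec (f n)) (not_le.mpr (hfmono hc))
    have hrtend : Tendsto r atTop atTop := by
      apply tendsto_atTop_atTop_of_monotone hrmono
      intro B
      obtain ⟨n, hn⟩ := exists_nat_ge B
      refine ⟨f n, le_trans hn (le_trans ?_ (le_max_left _ _))⟩
      exact_mod_cast hgfn n
    have hrc : RClass r := ⟨hr0, hrmono, hrtend⟩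
    have hfin := hall r hrc
    obtain ⟨n, hn⟩ := ENNReal.exists_nat_gt hfin.ne
    -- derive contradiction using j = n + 1
    set j := n + 1 with hj
    have hRle : prodSeq r (f j) ≤ (j : ℝ) ^ (f j + 1) := by
      have hfac : ∀ i ∈ Finset.range (f j + 1), r i ≤ (j : ℝ) := by
        intro i hi
        have hij : i ≤ f j := Nat.lt_succ_iff.mp (Finset.mem_range.mp hi)
        have hgi : g i ≤ j := hg_le i j hij
        exact max_le (Nat.cast_le.mpr hgi) (by exact_mod_cast Nat.one_le_iff_ne_zero.mpr (by omega))
      calc prodSeq r (f j) ≤ ∏ i ∈ Finset.range (f j + 1), (j : ℝ) :=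
            Finset.prod_le_prod (fun i _ => le_trans zero_le_one (hr1 i)) hfac
        _ = (j : ℝ) ^ (f j + 1) := by rw [Finset.prod_const, Finset.card_range]
    have hRpos : 0 < prodSeq r (f j) := lt_of_lt_of_le one_pos (one_le_prodSeq hr1 _)
    have hjpos : (0:ℝ) < (j:ℝ) := by positivity
    have hkeyreal : (j : ℝ) ≤ b (f j) / prodSeq r (f j) := by
      rw [le_div_iff₀ hRpos]
      calc (j:ℝ) * prodSeq r (f j) ≤ (j:ℝ) * (j:ℝ) ^ (f j + 1) :=
            mul_le_mul_of_nonneg_left hRle hjpos.le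
        _ = (j : ℝ) ^ (f j + 2) := by ring
        _ ≤ b (f j) := by exact_mod_cast hfb n
    have h1 : ((j : ℕ) : ℝ≥0∞) ≤ ⨆ p, ENNReal.ofReal (b p / prodSeq r p) := by
      rw [← ENNReal.ofReal_natCast]
      exact le_trans (ENNReal.ofReal_le_ofReal hkeyreal) (le_iSup (fun p => ENNReal.ofReal (b p / prodSeq r p)) (f j))
    have h2 := lt_of_le_of_lt h1 hn
    have : j < n := by exact_mod_cast h2
    omega

end Helpers

/-- Komatsu's lemma for seminorms over a compact set. -/
theorem stmt5 {d : ℕ} (M : ℕ → ℝ) (hMpos : ∀ p, 0 < M p) (hM0 : M 0 = 1)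
    (K : Set (Euc d)) (hK : IsCompact K)
    (φ : Euc d → ℂ) (hφ : ContDiff ℝ (⊤ : ℕ∞) φ) :
    (∃ h > 0, qnormK M K h φ < ⊤) ↔ (∀ r, RClass r → qrnormK M r K φ < ⊤) := by
  classical
  set A : ℕ → ℝ≥0∞ := fun p => ⨆ (k : Fin d → ℕ) (x : K),
    if (∑ i, k i) = p then ENNReal.ofReal ‖mderiv k φ x‖ else 0 with hA
  have hgr1 : ∀ h : ℝ, 0 < h →
      qnormK M K h φ = ⨆ p, A p / ENNReal.ofReal (h ^ p * M p) := by
    intro h hh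
    have : qnormK M K h φ = ⨆ (k : Fin d → ℕ) (x : K),
        ENNReal.ofReal ‖mderiv k φ x‖ / ENNReal.ofReal (h ^ (∑ i, k i) * M (∑ i, k i)) := by
      rw [qnormK]
      refine iSup_congr fun k => iSup_congr fun x => ?_
      rw [ENNReal.ofReal_div_of_pos (mul_pos (pow_pos hh _) (hMpos _))]
    rw [this, group_sup (fun k (x : K) => ENNReal.ofReal ‖mderiv k φ x‖)
      (fun k => ∑ i, k i) (fun p => ENNReal.ofReal (h ^ p * M p))]
  have hgr2 : ∀ r : ℕ → ℝ, RClass r →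
      qrnormK M r K φ = ⨆ p, A p / ENNReal.ofReal (prodSeq r p * M p) := by
    intro r hr
    have hRpos : ∀ p, (0:ℝ) < prodSeq r p :=
      fun p => lt_of_lt_of_le one_pos (one_le_prodSeq (rclass_one_le hr) p)
    have : qrnormK M r K φ = ⨆ (k : Fin d → ℕ) (x : K),
        ENNReal.ofReal ‖mderiv k φ x‖ /
          ENNReal.ofReal (prodSeq r (∑ i, k i) * M (∑ i, k i)) := by
      rw [qrnormK]
      refine iSup_congr fun k => iSup_congr fun x => ?_
      rw [ENNReal.ofReal_div_of_pos (mul_pos (hRpos _) (hMpos _))]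
    rw [this, group_sup (fun k (x : K) => ENNReal.ofReal ‖mderiv k φ x‖)
      (fun k => ∑ i, k i) (fun p => ENNReal.ofReal (prodSeq r p * M p))]
  by_cases htopA : ∃ p, A p = ⊤
  · obtain ⟨p0, hp0⟩ := htopA
    have hLfalse : ¬ ∃ h > 0, qnormK M K h φ < ⊤ := by
      rintro ⟨h, hh, hfin⟩
      rw [hgr1 h hh] at hfin
      have hle : A p0 / ENNReal.ofReal (h ^ p0 * M p0) ≤
          ⨆ p, A p / ENNReal.ofReal (h ^ p * M p) :=
        le_iSup (fun p => A p / ENNReal.ofReal (h ^ p * M p)) p0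
      rw [hp0, ENNReal.top_div_of_ne_top ENNReal.ofReal_ne_top] at hle
      exact absurd (lt_of_le_of_lt hle hfin) (lt_irrefl _)
    have hRfalse : ¬ ∀ r, RClass r → qrnormK M r K φ < ⊤ := by
      intro hall
      have hrc : RClass (fun n => (n : ℝ) + 1) := by
        refine ⟨by simp, fun a b hab => by simpa using hab, ?_⟩
        exact Filter.tendsto_atTop_add_const_right Filter.atTop 1 tendsto_natCast_atTop_atTop
      have hfin := hall _ hrc
      rw [hgr2 _ hrc] at hfin
      have hle : A p0 / ENNReal.ofReal (prodSeq (fun n => (n : ℝ) + 1) p0 * M p0) ≤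
          ⨆ p, A p / ENNReal.ofReal (prodSeq (fun n => (n : ℝ) + 1) p * M p) :=
        le_iSup (fun p => A p / ENNReal.ofReal (prodSeq (fun n => (n : ℝ) + 1) p * M p)) p0
      rw [hp0, ENNReal.top_div_of_ne_top ENNReal.ofReal_ne_top] at hle
      exact absurd (lt_of_le_of_lt hle hfin) (lt_irrefl _)
    exact iff_of_false hLfalse hRfalse
  · push_neg at htopA
    set b : ℕ → ℝ := fun p => (A p).toReal / M p with hb_def
    have hb : ∀ p, 0 ≤ b p := fun p => div_nonneg ENNReal.toReal_nonneg (hMpos p).le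
    have hconv : ∀ (c : ℝ), 0 < c → ∀ p,
        A p / ENNReal.ofReal (c * M p) = ENNReal.ofReal (b p / c) := by
      intro c hc p
      conv_lhs => rw [← ENNReal.ofReal_toReal (htopA p)]
      rw [← ENNReal.ofReal_div_of_pos (mul_pos hc (hMpos p))]
      congr 1
      rw [hb_def]
      rw [div_div]
      ring_nf
    constructor
    · rintro ⟨h, hh, hfin⟩ r hr
      rw [hgr2 r hr, iSup_congr fun p => hconv (prodSeq r p)
        (lt_of_lt_of_le one_pos (one_le_prodSeq (rclass_one_le hr) p)) p]
      refine (abstract_komatsu b hb).mp ⟨h, hh, ?_⟩ r hr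
      rw [hgr1 h hh, iSup_congr fun p => hconv (h ^ p) (pow_pos hh p) p] at hfin
      exact hfin
    · intro hall
      have hall' : ∀ r, RClass r → (⨆ p, ENNReal.ofReal (b p / prodSeq r p)) < ⊤ := by
        intro r hr
        have := hall r hr
        rwa [hgr2 r hr, iSup_congr fun p => hconv (prodSeq r p)
          (lt_of_lt_of_le one_pos (one_le_prodSeq (rclass_one_le hr) p)) p] at this
      obtain ⟨h, hh, hfin⟩ := (abstract_komatsu b hb).mpr hall'
      refine ⟨h, hh, ?_⟩
      rw [hgr1 h hh, iSup_congr fun p => hconv (h ^ p) (pow_pos hh p) p]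
      exact hfin

end
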